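/- Suppose the grading (g_j)_{j∈ℤ} of M_N(ℂ) is good for the nilpotent matrix e ∈ g₂. Then for every j ≤ −1 the linear map g_j → g_{j+2}, x ↦ ex + xe, is injective, and for every j ≥ −1 it is surjective. -/

import Mathlib

/-!
Let `s` act on the generalized `μ`-eigenspace of `h` by `exp (π i μ / 2)`. Then `s` is invertible,
commutes with `h`, and, because `e` shifts generalized eigenvalues of `h` by `2`, anticommutes
with `e`. Hence if `x ∈ g_j` anticommutes with `e`, then `x s ∈ g_j` commutes with `e`, and
goodness forces `x s = 0` as soon as `j < 0`.

Surjectivity is the dual statement: the trace form pairs `g_j` perfectly with `g_{-j}`, and for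
this pairing the adjoint of `x ↦ e x + x e` on `g_j` is the same map on `g_{-j-2}`, which is
injective when `j ≥ -1`.
-/

/-- The `ad h`-eigenspace grading of `M_N(ℂ)`:
`g_j = {x ∈ M_N(ℂ) : hx − xh = j·x}`. -/
noncomputable def adGrading {N : ℕ} (h : Matrix (Fin N) (Fin N) ℂ) (j : ℤ) :
    Submodule ℂ (Matrix (Fin N) (Fin N) ℂ) where
  carrier := {x | h * x - x * h = (j : ℂ) • x}
  zero_mem' := by simp
  add_mem' := by
    intro a b ha hb
    simp only [Set.mem_setOf_eq] at ha hb ⊢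
    rw [smul_add, ← ha, ← hb]
    noncomm_ring
  smul_mem' := by
    intro c a ha
    simp only [Set.mem_setOf_eq] at ha ⊢
    rw [mul_smul_comm, smul_mul_assoc, ← smul_sub, ha]
    exact smul_comm _ _ _

theorem LinearMap.ext_of_iSup_eq_top {R M N ι : Type*} [Semiring R] [AddCommMonoid M]
    [Module R M] [AddCommMonoid N] [Module R N] {W : ι → Submodule R M} (hW : ⨆ i, W i = ⊤)
    {f g : M →ₗ[R] N} (h : ∀ i, ∀ v ∈ W i, f v = g v) : f = g := by
  ext v
  have hv : v ∈ ⨆ i, W i := hW ▸ Submodule.mem_top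
  exact Submodule.iSup_induction W (motive := fun v => f v = g v) hv h (by simp)
    fun x y hx hy => by simp [hx, hy]

namespace DirectSum.IsInternal

variable {R M ι : Type*} [CommRing R] [AddCommGroup M] [Module R M] [DecidableEq ι]
  {W : ι → Submodule R M}

noncomputable def scalarEnd (hW : IsInternal W) (f : ι → R) : Module.End R M :=
  toModule R ι M (fun i => f i • (W i).subtype) ∘ₗ
    (LinearEquiv.ofBijective (coeLinearMap W) hW).symm.toLinearMap

theorem scalarEnd_apply_of_mem (hW : IsInternal W) (f : ι → R) {i : ι} {v : M}
    (hv : v ∈ W i) : hW.scalarEnd f v = f i • v := by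
  obtain ⟨w, rfl⟩ : ∃ w : W i, (w : M) = v := ⟨⟨v, hv⟩, rfl⟩
  have hw : (LinearEquiv.ofBijective (coeLinearMap W) hW).symm w = lof R ι (fun i => W i) i w :=
    (LinearEquiv.symm_apply_eq _).2 (coeLinearMap_lof W i w).symm
  rw [scalarEnd, LinearMap.comp_apply, LinearEquiv.coe_coe, hw, toModule_lof]
  rfl

theorem scalarEnd_mul (hW : IsInternal W) (f g : ι → R) :
    hW.scalarEnd (f * g) = hW.scalarEnd f * hW.scalarEnd g :=
  LinearMap.ext_of_iSup_eq_top hW.submodule_iSup_eq_top fun i v hv => by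
    rw [Module.End.mul_apply, scalarEnd_apply_of_mem hW g hv,
      scalarEnd_apply_of_mem hW f (Submodule.smul_mem _ _ hv), scalarEnd_apply_of_mem hW _ hv,
      smul_smul, Pi.mul_apply]

theorem scalarEnd_one (hW : IsInternal W) : hW.scalarEnd 1 = 1 :=
  LinearMap.ext_of_iSup_eq_top hW.submodule_iSup_eq_top fun i v hv => by
    rw [scalarEnd_apply_of_mem hW _ hv, Pi.one_apply, one_smul, Module.End.one_apply]

theorem commute_scalarEnd (hW : IsInternal W) (f : ι → R) {T : Module.End R M}
    (hT : ∀ i, ∀ v ∈ W i, T v ∈ W i) : Commute (hW.scalarEnd f) T :=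
  LinearMap.ext_of_iSup_eq_top hW.submodule_iSup_eq_top fun i v hv => by
    rw [Module.End.mul_apply, Module.End.mul_apply, scalarEnd_apply_of_mem hW f hv,
      scalarEnd_apply_of_mem hW f (hT i v hv), map_smul]

end DirectSum.IsInternal

namespace Module.End

variable {R V : Type*} [CommRing R] [AddCommGroup V] [Module R V]

theorem mapsTo_maxGenEigenspace_add_of_commutator_eq {H E : Module.End R V} {c : R}
    (hHE : H * E - E * H = c • E) {μ : R} {v : V} (hv : v ∈ H.maxGenEigenspace μ) :
    E v ∈ H.maxGenEigenspace (μ + c) := by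
  have shift : (H - (μ + c) • 1) * E = E * (H - μ • 1) := by
    rw [sub_mul, mul_sub, add_smul, add_mul, smul_mul_assoc, smul_mul_assoc, one_mul,
      mul_smul_comm, mul_one, ← hHE]
    abel
  have shift_pow (k : ℕ) : (H - (μ + c) • 1) ^ k * E = E * (H - μ • 1) ^ k := by
    induction k with
    | zero => simp
    | succ k ih => rw [pow_succ, pow_succ, mul_assoc, shift, ← mul_assoc, ih, mul_assoc]
  obtain ⟨k, hk⟩ := (mem_maxGenEigenspace _ _ _).1 hv
  refine (mem_maxGenEigenspace _ _ _).2 ⟨k, ?_⟩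
  rw [← Module.End.mul_apply, shift_pow, Module.End.mul_apply, hk, map_zero]

theorem exists_unit_commute_mul_eq_neg {V : Type*} [AddCommGroup V] [Module ℂ V]
    [FiniteDimensional ℂ V] {H E : Module.End ℂ V}
    (hHE : H * E - E * H = (2 : ℂ) • E) :
    ∃ G : (Module.End ℂ V)ˣ, Commute (G : Module.End ℂ V) H ∧ G * E = -(E * G) := by
  have hint : DirectSum.IsInternal H.maxGenEigenspace :=
    DirectSum.isInternal_submodule_of_iSupIndep_of_iSup_eq_top
      H.independent_maxGenEigenspace H.iSup_maxGenEigenspace_eq_top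
  set f : ℂ → ℂ := fun μ => Complex.exp (Real.pi * Complex.I * μ / 2) with hf
  have hf_add_two (μ : ℂ) : f (μ + 2) = -f μ := by
    simp only [hf]
    rw [show (Real.pi : ℂ) * Complex.I * (μ + 2) / 2 = Real.pi * Complex.I * μ / 2 +
      Real.pi * Complex.I by ring, Complex.exp_add, Complex.exp_pi_mul_I, mul_neg_one]
  have hf_mul_inv : f * f⁻¹ = 1 := funext fun μ => mul_inv_cancel₀ (Complex.exp_ne_zero _)
  refine ⟨⟨hint.scalarEnd f, hint.scalarEnd f⁻¹, ?_, ?_⟩, ?_, ?_⟩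
  · rw [← hint.scalarEnd_mul, hf_mul_inv, hint.scalarEnd_one]
  · rw [← hint.scalarEnd_mul, mul_comm, hf_mul_inv, hint.scalarEnd_one]
  · exact hint.commute_scalarEnd f fun μ v hv =>
      mapsTo_maxGenEigenspace_of_comm (Commute.refl H) μ hv
  · refine LinearMap.ext_of_iSup_eq_top hint.submodule_iSup_eq_top fun μ v hv => ?_
    rw [Module.End.mul_apply, LinearMap.neg_apply, Module.End.mul_apply,
      hint.scalarEnd_apply_of_mem f (mapsTo_maxGenEigenspace_add_of_commutator_eq hHE hv),
      hint.scalarEnd_apply_of_mem f hv, map_smul, hf_add_two, neg_smul]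

end Module.End

theorem Matrix.exists_unit_commute_mul_eq_neg {n : Type*} [Fintype n] [DecidableEq n]
    {h e : Matrix n n ℂ} (he : h * e - e * h = (2 : ℂ) • e) :
    ∃ g : (Matrix n n ℂ)ˣ, Commute (g : Matrix n n ℂ) h ∧ g * e = -(e * g) := by
  set Φ : Matrix n n ℂ ≃ₐ[ℂ] Module.End ℂ (n → ℂ) := Matrix.toLinAlgEquiv'
  obtain ⟨G, hGh, hGe⟩ := Module.End.exists_unit_commute_mul_eq_neg (H := Φ h) (E := Φ e)
    (by simpa only [map_sub, map_mul, map_smul] using congrArg Φ he)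
  refine ⟨Units.map Φ.symm.toMonoidHom G, ?_, ?_⟩ <;> apply Φ.injective
  · simpa using hGh.eq
  · simpa using hGe

theorem Matrix.exists_eq_trace_mul {R n : Type*} [CommSemiring R] [Fintype n] [DecidableEq n]
    (φ : Module.Dual R (Matrix n n R)) : ∃ z : Matrix n n R, ∀ y, φ y = (z * y).trace := by
  refine ⟨Matrix.of fun i k => φ (Matrix.single k i 1), fun y => ?_⟩
  conv_lhs => rw [Matrix.matrix_eq_sum_single y]
  have hsingle (i k : n) : Matrix.single i k (y i k) = y i k • Matrix.single i k (1 : R) := by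
    rw [Matrix.smul_single, smul_eq_mul, mul_one]
  simp only [map_sum, hsingle, map_smul, smul_eq_mul, Matrix.trace, Matrix.diag, Matrix.mul_apply,
    Matrix.of_apply]
  rw [Finset.sum_comm]
  simp only [mul_comm]

section adGrading

variable {N : ℕ} {h : Matrix (Fin N) (Fin N) ℂ}

theorem mem_adGrading {j : ℤ} {x : Matrix (Fin N) (Fin N) ℂ} :
    x ∈ adGrading h j ↔ h * x - x * h = (j : ℂ) • x := Iff.rfl

theorem mul_mem_adGrading {x y : Matrix (Fin N) (Fin N) ℂ} {i k : ℤ}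
    (hx : x ∈ adGrading h i) (hy : y ∈ adGrading h k) : x * y ∈ adGrading h (i + k) := by
  rw [mem_adGrading] at hx hy ⊢
  rw [show h * (x * y) - x * y * h = (h * x - x * h) * y + x * (h * y - y * h) by noncomm_ring,
    hx, hy, smul_mul_assoc, mul_smul_comm, ← add_smul, Int.cast_add]

theorem anticommutator_mem_adGrading {e x : Matrix (Fin N) (Fin N) ℂ} {j : ℤ}
    (he : e ∈ adGrading h 2) (hx : x ∈ adGrading h j) : e * x + x * e ∈ adGrading h (j + 2) :=
  add_mem (add_comm 2 j ▸ mul_mem_adGrading he hx) (mul_mem_adGrading hx he)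

theorem trace_mul_eq_zero_of_mem_adGrading {x y : Matrix (Fin N) (Fin N) ℂ} {i k : ℤ}
    (hx : x ∈ adGrading h i) (hy : y ∈ adGrading h k) (hik : i + k ≠ 0) : (x * y).trace = 0 := by
  have htr := congrArg Matrix.trace (mem_adGrading.1 (mul_mem_adGrading hx hy))
  rw [Matrix.trace_sub, Matrix.trace_mul_comm, sub_self, Matrix.trace_smul, smul_eq_mul,
    eq_comm, mul_eq_zero] at htr
  exact htr.resolve_left (by exact_mod_cast hik)

theorem eq_zero_of_anticommutator_eq_zero (hindep : iSupIndep (adGrading h))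
    {e : Matrix (Fin N) (Fin N) ℂ} (he : e ∈ adGrading h 2)
    (hgood : ∀ x : Matrix (Fin N) (Fin N) ℂ, x * e = e * x → x ∈ ⨆ j ≥ (0 : ℤ), adGrading h j)
    {j : ℤ} (hj : j ≤ -1) {x : Matrix (Fin N) (Fin N) ℂ} (hx : x ∈ adGrading h j)
    (hxe : e * x + x * e = 0) : x = 0 := by
  obtain ⟨s, hsh, hse⟩ := Matrix.exists_unit_commute_mul_eq_neg (h := h) (e := e)
    (by exact_mod_cast mem_adGrading.1 he)
  have hcomm : x * s * e = e * (x * s) := by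
    rw [mul_assoc, hse, mul_neg, ← mul_assoc, eq_neg_of_add_eq_zero_right hxe, neg_mul, neg_neg,
      mul_assoc]
  have hs : (s : Matrix (Fin N) (Fin N) ℂ) ∈ adGrading h 0 := by
    simp [mem_adGrading, hsh.eq]
  have hxs : x * s ∈ adGrading h j := by simpa using mul_mem_adGrading hx hs
  have hxs_zero : x * s = 0 :=
    Submodule.disjoint_def.1 (hindep.disjoint_biSup (y := {k | 0 ≤ k}) fun h0 : 0 ≤ j => by omega)
      _ hxs (hgood _ hcomm)
  simpa using congrArg (· * ((s⁻¹ : (Matrix (Fin N) (Fin N) ℂ)ˣ) : Matrix (Fin N) (Fin N) ℂ))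
    hxs_zero

theorem exists_mem_adGrading_trace_mul_eq (htop : ⨆ j, adGrading h j = ⊤)
    (z : Matrix (Fin N) (Fin N) ℂ) (d : ℤ) :
    ∃ z' ∈ adGrading h (-d), ∀ w ∈ adGrading h d, (z' * w).trace = (z * w).trace := by
  have hz : z ∈ ⨆ j, adGrading h j := htop ▸ Submodule.mem_top
  refine Submodule.iSup_induction _ (motive := fun z =>
    ∃ z' ∈ adGrading h (-d), ∀ w ∈ adGrading h d, (z' * w).trace = (z * w).trace) hz
    (fun k z hz => ?_) ⟨0, zero_mem _, by simp⟩ ?_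
  · by_cases hk : k = -d
    · exact ⟨z, hk ▸ hz, fun _ _ => rfl⟩
    · exact ⟨0, zero_mem _, fun w hw => by
        rw [zero_mul, Matrix.trace_zero, trace_mul_eq_zero_of_mem_adGrading hz hw (by omega)]⟩
  · rintro z₁ z₂ ⟨z₁', hz₁', h₁⟩ ⟨z₂', hz₂', h₂⟩
    exact ⟨z₁' + z₂', add_mem hz₁' hz₂', fun w hw => by
      rw [add_mul, add_mul, Matrix.trace_add, Matrix.trace_add, h₁ w hw, h₂ w hw]⟩

theorem eq_zero_of_trace_mul_eq_zero (htop : ⨆ j, adGrading h j = ⊤) {n : ℤ}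
    {u : Matrix (Fin N) (Fin N) ℂ} (hu : u ∈ adGrading h n)
    (hperp : ∀ x ∈ adGrading h (-n), (u * x).trace = 0) : u = 0 := by
  refine Matrix.ext_iff_trace_mul_right.2 fun y => ?_
  have hy : y ∈ ⨆ j, adGrading h j := htop ▸ Submodule.mem_top
  refine Submodule.iSup_induction _ (motive := fun y => (u * y).trace = (0 * y).trace) hy
    (fun k y hy => ?_) (by simp) fun y₁ y₂ h₁ h₂ => by simp_all [mul_add]
  rw [zero_mul, Matrix.trace_zero]
  by_cases hk : k = -n
  · exact hperp y (hk ▸ hy)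
  · exact trace_mul_eq_zero_of_mem_adGrading hu hy (by omega)

theorem exists_anticommutator_eq (htop : ⨆ j, adGrading h j = ⊤)
    {e : Matrix (Fin N) (Fin N) ℂ} (he : e ∈ adGrading h 2) {j : ℤ}
    (hinj : ∀ z ∈ adGrading h (-(j + 2)), e * z + z * e = 0 → z = 0)
    {y : Matrix (Fin N) (Fin N) ℂ} (hy : y ∈ adGrading h (j + 2)) :
    ∃ x ∈ adGrading h j, e * x + x * e = y := by
  by_contra! hy_range
  set T := LinearMap.mulLeft ℂ e + LinearMap.mulRight ℂ e
  have hT (x : Matrix (Fin N) (Fin N) ℂ) : T x = e * x + x * e := rfl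
  obtain ⟨φ, hφy, hφT⟩ := Submodule.exists_dual_map_eq_bot_of_notMem
    (p := (adGrading h j).map T) (x := y) (fun ⟨x, hx, hxy⟩ => hy_range x hx hxy)
    inferInstance
  obtain ⟨z, hz⟩ := Matrix.exists_eq_trace_mul φ
  obtain ⟨z', hz'_mem, hz'⟩ := exists_mem_adGrading_trace_mul_eq htop z (j + 2)
  have hTz' : e * z' + z' * e = 0 := by
    refine eq_zero_of_trace_mul_eq_zero htop (n := -j)
      (by simpa using anticommutator_mem_adGrading he hz'_mem) fun x hx => ?_
    rw [neg_neg] at hx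
    calc ((e * z' + z' * e) * x).trace = (z' * (e * x + x * e)).trace := by
          rw [add_mul, mul_add, Matrix.trace_add, Matrix.trace_add, add_comm, mul_assoc z',
            mul_assoc e, Matrix.trace_mul_comm e, mul_assoc z' x]
      _ = (z * (e * x + x * e)).trace := hz' _ (anticommutator_mem_adGrading he hx)
      _ = 0 := by
          rw [← hz, ← hT]
          exact (Submodule.eq_bot_iff _).1 hφT _ ⟨T x, ⟨x, hx, rfl⟩, rfl⟩
  apply hφy
  rw [hz, ← hz' y hy, hinj z' hz'_mem hTz', zero_mul, Matrix.trace_zero]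

end adGrading

theorem stmt7_general {N : ℕ} (h e : Matrix (Fin N) (Fin N) ℂ)
    (hinternal : DirectSum.IsInternal (adGrading h))
    (he : e ∈ adGrading h 2)
    (hgood : ∀ x : Matrix (Fin N) (Fin N) ℂ, x * e = e * x →
      x ∈ ⨆ j ≥ (0 : ℤ), adGrading h j) :
    (∀ j : ℤ, j ≤ -1 → ∀ x ∈ adGrading h j, e * x + x * e = 0 → x = 0) ∧
    (∀ j : ℤ, -1 ≤ j → ∀ y ∈ adGrading h (j + 2), ∃ x ∈ adGrading h j,
      e * x + x * e = y) := by
  have hinj (j : ℤ) (hj : j ≤ -1) (x : Matrix (Fin N) (Fin N) ℂ) (hx : x ∈ adGrading h j)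
      (hx0 : e * x + x * e = 0) : x = 0 :=
    eq_zero_of_anticommutator_eq_zero hinternal.submodule_iSupIndep he hgood hj hx hx0
  exact ⟨hinj, fun j hj y hy => exists_anticommutator_eq hinternal.submodule_iSup_eq_top he
    (fun z hz => hinj _ (by omega) z hz) hy⟩

/-- Suppose the grading `(g_j)` of `M_N(ℂ)` is good for the nilpotent
matrix `e ∈ g₂`.  Then for every `j ≤ −1` the map `g_j → g_{j+2}`, `x ↦ ex + xe`,
is injective, and for every `j ≥ −1` it is surjective. -/
theorem stmt7 {N : ℕ} (h e : Matrix (Fin N) (Fin N) ℂ)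
    (hinternal : DirectSum.IsInternal (adGrading h))
    (hnil : IsNilpotent e)
    (he : e ∈ adGrading h 2)
    (hgood : ∀ x : Matrix (Fin N) (Fin N) ℂ, x * e = e * x →
      x ∈ ⨆ j ≥ (0 : ℤ), adGrading h j) :
    (∀ j : ℤ, j ≤ -1 → ∀ x ∈ adGrading h j, e * x + x * e = 0 → x = 0) ∧
    (∀ j : ℤ, -1 ≤ j → ∀ y ∈ adGrading h (j + 2), ∃ x ∈ adGrading h j,
      e * x + x * e = y) :=
  stmt7_general h e hinternal he hgood
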